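/- arXiv:1004.0025 — 2 statements merged into one kernel-verified Lean document; each statement's English description precedes it below -/
import Mathlib

section
/- The set of rational numbers r for which there exist regular integers p and q with 1 < p ≤ 128, 1 < q ≤ 54, r = p/q and 1 < r < 1 + √2 has exactly 38 elements. -/
/-- A positive integer is regular if it is of the form `2^a · 3^b · 5^c`. -/
def Regular (n : ℕ) : Prop := ∃ a b c : ℕ, n = 2 ^ a * 3 ^ b * 5 ^ c

/-!
A regular `n ≤ hi` has exponents at most `log₂ hi`, `log₃ hi` and `log₅ hi`, so the regular numbers
in a bounded interval form an explicit finite set. For `r ≥ 1` the condition `r < 1 + √2` is the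
rational condition `(r - 1)² < 2`, so the admissible ratios are the image of an explicit finite
set of pairs, and counting them is a finite computation.
-/

open Finset

def regularIoc (lo hi : ℕ) : Finset ℕ :=
  ((range (Nat.log 2 hi + 1) ×ˢ range (Nat.log 3 hi + 1) ×ˢ range (Nat.log 5 hi + 1)).image
    fun e => 2 ^ e.1 * 3 ^ e.2.1 * 5 ^ e.2.2).filter fun n => lo < n ∧ n ≤ hi

lemma mem_regularIoc {lo hi n : ℕ} : n ∈ regularIoc lo hi ↔ Regular n ∧ lo < n ∧ n ≤ hi := by
  simp only [regularIoc, mem_filter, mem_image, mem_product, mem_range, Regular]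
  constructor
  · rintro ⟨⟨⟨a, b, c⟩, -, rfl⟩, h⟩
    exact ⟨⟨a, b, c, rfl⟩, h⟩
  · rintro ⟨⟨a, b, c, rfl⟩, hlo, hhi⟩
    have hpos : 0 < 2 ^ a * 3 ^ b * 5 ^ c := by positivity
    have h2 : 2 ^ a ≤ hi := (Nat.le_of_dvd hpos ⟨3 ^ b * 5 ^ c, by ring⟩).trans hhi
    have h3 : 3 ^ b ≤ hi := (Nat.le_of_dvd hpos ⟨2 ^ a * 5 ^ c, by ring⟩).trans hhi
    have h5 : 5 ^ c ≤ hi := (Nat.le_of_dvd hpos ⟨2 ^ a * 3 ^ b, by ring⟩).trans hhi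
    exact ⟨⟨(a, b, c), ⟨Nat.lt_succ_of_le (Nat.le_log_of_pow_le (by norm_num) h2),
      Nat.lt_succ_of_le (Nat.le_log_of_pow_le (by norm_num) h3),
      Nat.lt_succ_of_le (Nat.le_log_of_pow_le (by norm_num) h5)⟩, rfl⟩, hlo, hhi⟩

lemma lt_one_add_sqrt_two_iff {x : ℝ} (hx : 1 ≤ x) : x < 1 + √2 ↔ (x - 1) ^ 2 < 2 := by
  rw [← Real.lt_sqrt (sub_nonneg.mpr hx), sub_lt_iff_lt_add']

def admissibleRatios (P Q : Finset ℕ) : Finset ℚ :=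
  ((P ×ˢ Q).filter fun x => 1 < (x.1 : ℚ) / x.2 ∧ ((x.1 : ℚ) / x.2 - 1) ^ 2 < 2).image
    fun x => (x.1 : ℚ) / x.2

lemma mem_admissibleRatios {P Q : Finset ℕ} {r : ℚ} : r ∈ admissibleRatios P Q ↔
    ∃ p ∈ P, ∃ q ∈ Q, r = p / q ∧ 1 < (r : ℝ) ∧ (r : ℝ) < 1 + √2 := by
  have hr : (1 < (r : ℝ) ∧ (r : ℝ) < 1 + √2) ↔ 1 < r ∧ (r - 1) ^ 2 < 2 := by
    have h1 : (1 : ℝ) < r ↔ 1 < r := by norm_cast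
    rw [h1]
    refine and_congr_right fun h => ?_
    rw [lt_one_add_sqrt_two_iff (by exact_mod_cast h.le)]
    norm_cast
  simp only [admissibleRatios, mem_image, mem_filter, mem_product, hr]
  constructor
  · rintro ⟨⟨p, q⟩, ⟨⟨hp, hq⟩, hadm⟩, rfl⟩
    exact ⟨p, hp, q, hq, rfl, hadm⟩
  · rintro ⟨p, hp, q, hq, rfl, hadm⟩
    exact ⟨(p, q), ⟨⟨hp, hq⟩, hadm⟩, rfl⟩

/-- There are exactly 38 admissible ratios `r = p/q` with regular integers
`1 < p ≤ 128` and `1 < q ≤ 54` and `1 < r < 1 + √2`. -/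
theorem price_procedure_one_card :
    {r : ℚ | ∃ p q : ℕ, Regular p ∧ Regular q ∧ 1 < p ∧ p ≤ 128 ∧ 1 < q ∧ q ≤ 54 ∧
      r = (p : ℚ) / q ∧ 1 < (r : ℝ) ∧ (r : ℝ) < 1 + Real.sqrt 2}.ncard = 38 := by
  have hcard : (admissibleRatios (regularIoc 1 128) (regularIoc 1 54)).card = 38 := by
    decide +kernel
  rw [← Set.ncard_coe_finset] at hcard
  convert hcard using 2
  ext r
  simp only [Set.mem_ofPred_eq, mem_coe, mem_admissibleRatios, mem_regularIoc]
  constructor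
  · rintro ⟨p, q, hp, hq, hp1, hp128, hq1, hq54, hr⟩
    exact ⟨p, ⟨hp, hp1, hp128⟩, q, ⟨hq, hq1, hq54⟩, hr⟩
  · rintro ⟨p, ⟨hp, hp1, hp128⟩, q, ⟨hq, hq1, hq54⟩, hr⟩
    exact ⟨p, q, hp, hq, hp1, hp128, hq1, hq54, hr⟩
end

section
/- The set of rational numbers r for which there exist regular integers p and q with 2 ≤ p ≤ 81, 2 ≤ q ≤ 81, r = p/q and 1 < r < 1 + √2 has exactly 40 elements. -/
/-!
For a ratio `r = p / q > 1`, the bound `r < 1 + √2` says `(r - 1)² < 2`, i.e. `p² < 2pq + q²`,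
a condition on natural numbers. The regular numbers up to `81` are the products `2^a 3^b 5^c`
with exponents bounded by the logarithms of `81`, so the ratios form the image of an explicit
finite set of pairs, and the count `40` is a finite computation.
-/

open Finset

def regularUpTo (N : ℕ) : Finset ℕ :=
  ((range (Nat.log 2 N + 1) ×ˢ range (Nat.log 3 N + 1) ×ˢ range (Nat.log 5 N + 1)).image
    fun e => 2 ^ e.1 * 3 ^ e.2.1 * 5 ^ e.2.2).filter (· ≤ N)

theorem mem_regularUpTo {N n : ℕ} : n ∈ regularUpTo N ↔ Regular n ∧ n ≤ N := by
  simp only [regularUpTo, mem_filter, mem_image, mem_product, mem_range, Nat.lt_succ_iff]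
  constructor
  · rintro ⟨⟨⟨a, b, c⟩, -, rfl⟩, hN⟩
    exact ⟨⟨a, b, c, rfl⟩, hN⟩
  · rintro ⟨⟨a, b, c, rfl⟩, hN⟩
    have hpos : 0 < 2 ^ a * 3 ^ b * 5 ^ c := by positivity
    have log_bound {p k : ℕ} (hp : 1 < p) (hdvd : p ^ k ∣ 2 ^ a * 3 ^ b * 5 ^ c) :
        k ≤ Nat.log p N :=
      Nat.le_log_of_pow_le hp ((Nat.le_of_dvd hpos hdvd).trans hN)
    refine ⟨⟨(a, b, c), ⟨?_, ?_, ?_⟩, rfl⟩, hN⟩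
    · exact log_bound (by norm_num) (Dvd.intro (3 ^ b * 5 ^ c) (by ring))
    · exact log_bound (by norm_num) (Dvd.intro (2 ^ a * 5 ^ c) (by ring))
    · exact log_bound (by norm_num) (Dvd.intro_left _ rfl)

theorem one_lt_and_lt_one_add_sqrt_two_iff {x : ℝ} :
    1 < x ∧ x < 1 + √2 ↔ 1 < x ∧ x ^ 2 < 2 * x + 1 := by
  refine and_congr_right fun hx => ?_
  rw [← sub_lt_iff_lt_add', Real.lt_sqrt (by linarith)]
  constructor <;> intro h <;> linarith

theorem one_lt_div_and_div_lt_one_add_sqrt_two_iff {p q : ℕ} (hq : 0 < q) :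
    1 < (p / q : ℝ) ∧ (p / q : ℝ) < 1 + √2 ↔ q < p ∧ p ^ 2 < 2 * p * q + q ^ 2 := by
  have hqR : (0 : ℝ) < q := by exact_mod_cast hq
  have hscaled : (2 * (p / q : ℝ) + 1) * q ^ 2 = 2 * p * q + q ^ 2 := by field_simp
  rw [one_lt_and_lt_one_add_sqrt_two_iff, one_lt_div hqR, div_pow, div_lt_iff₀ (by positivity),
    hscaled]
  norm_cast

def admissiblePairs (N : ℕ) : Finset (ℕ × ℕ) :=
  let R := (regularUpTo N).filter (2 ≤ ·)
  (R ×ˢ R).filter fun pq => pq.2 < pq.1 ∧ pq.1 ^ 2 < 2 * pq.1 * pq.2 + pq.2 ^ 2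

theorem mem_admissiblePairs {N p q : ℕ} :
    (p, q) ∈ admissiblePairs N ↔ Regular p ∧ Regular q ∧ 2 ≤ p ∧ p ≤ N ∧ 2 ≤ q ∧ q ≤ N ∧
      q < p ∧ p ^ 2 < 2 * p * q + q ^ 2 := by
  simp only [admissiblePairs, mem_filter, mem_product, mem_regularUpTo]
  tauto

/-- There are exactly 40 admissible ratios `r = p/q` with regular integers
`2 ≤ p ≤ 81` and `2 ≤ q ≤ 81` and `1 < r < 1 + √2` (Procedure 4). -/
theorem procedure_four_card :
    {r : ℚ | ∃ p q : ℕ, Regular p ∧ Regular q ∧ 2 ≤ p ∧ p ≤ 81 ∧ 2 ≤ q ∧ q ≤ 81 ∧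
      r = (p : ℚ) / q ∧ 1 < (r : ℝ) ∧ (r : ℝ) < 1 + Real.sqrt 2}.ncard = 40 := by
  have hS : {r : ℚ | ∃ p q : ℕ, Regular p ∧ Regular q ∧ 2 ≤ p ∧ p ≤ 81 ∧ 2 ≤ q ∧ q ≤ 81 ∧
      r = (p : ℚ) / q ∧ 1 < (r : ℝ) ∧ (r : ℝ) < 1 + Real.sqrt 2} =
      ((admissiblePairs 81).image fun pq : ℕ × ℕ => (pq.1 : ℚ) / pq.2 : Set ℚ) := by
    ext r
    simp only [coe_image, Set.mem_image, Set.mem_ofPred_eq, mem_coe, Prod.exists,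
      mem_admissiblePairs]
    refine exists₂_congr fun p q => ?_
    constructor
    · rintro ⟨hp, hq, hp2, hp81, hq2, hq81, rfl, hr⟩
      push_cast at hr
      exact ⟨⟨hp, hq, hp2, hp81, hq2, hq81,
        (one_lt_div_and_div_lt_one_add_sqrt_two_iff (by omega)).1 hr⟩, rfl⟩
    · rintro ⟨⟨hp, hq, hp2, hp81, hq2, hq81, hr⟩, rfl⟩
      push_cast
      exact ⟨hp, hq, hp2, hp81, hq2, hq81, rfl,
        (one_lt_div_and_div_lt_one_add_sqrt_two_iff (by omega)).2 hr⟩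
  rw [hS, Set.ncard_coe_finset]
  decide +kernel
end
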